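/- For every n ≥ 1 and every i with 0 ≤ i ≤ n-1, the Dickson invariants satisfy the recursion d_{n,i} = d_{n-1,i-1}^p + d_{n-1,i} · h_n, where by convention d_{n-1,-1} = 0 and d_{n-1,n-1} = 1, and d_{n-1,j} denotes the Dickson invariant formed from the first n-1 variables viewed inside S. -/

import Mathlib

open MvPolynomial

/-! In any domain over `𝔽_p`, `∏_{t ∈ 𝔽_p} (w - t a) = w ^ p - a ^ (p - 1) w`. Since
`V_{k+1} = V_k + 𝔽_p y_{k+1}` with the cosets distinct, `f_{k+1}(r) = ∏_t f_k(r - t y_{k+1})`;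
if `f_k` is additive this equals `f_k(r) ^ p - h_{k+1} f_k(r)`, which is again additive by
Frobenius. Starting from `f_0 = X`, induction gives `f_n = f_{n-1} ^ p - h_n f_{n-1}`, and the
recursion is the coefficient of `X ^ (p ^ i)` in this identity: `g ^ p` has coefficient
`g_{p^(i-1)} ^ p` there when `i ≥ 1`, and none at `X`. -/

/-- `V p n k` : the set of `𝔽_p`-linear combinations of the first `k` variables. -/
noncomputable def V (p n k : ℕ) [Fact p.Prime] : Finset (MvPolynomial (Fin n) (ZMod p)) :=
  (Finset.univ : Finset (Fin n → ZMod p)).image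
    (fun c => ∑ j ∈ Finset.univ.filter (fun j : Fin n => j.val < k), C (c j) * X j)

/-- `f p n k = ∏_{u ∈ V_k} (X - C u)`. -/
noncomputable def f (p n k : ℕ) [Fact p.Prime] :
    Polynomial (MvPolynomial (Fin n) (ZMod p)) :=
  ∏ u ∈ V p n k, (Polynomial.X - Polynomial.C u)

/-- Dickson invariant `d_{k,i}`. -/
noncomputable def d (p n k i : ℕ) [Fact p.Prime] : MvPolynomial (Fin n) (ZMod p) :=
  (-1) ^ (k - i) * (f p n k).coeff (p ^ i)

/-- Borel generator: `hGen p n j` is `h_{j+1}` of the paper. -/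
noncomputable def hGen (p n : ℕ) [Fact p.Prime] (j : Fin n) : MvPolynomial (Fin n) (ZMod p) :=
  (Polynomial.eval (X j) (f p n j.val)) ^ (p - 1)

/-- Action of `GL_n(𝔽_p)` on `S` by linear substitution `g · y_j = ∑_i g_{ij} y_i`. -/
noncomputable def gact (p n : ℕ) [Fact p.Prime] (g : GL (Fin n) (ZMod p)) :
    MvPolynomial (Fin n) (ZMod p) →ₐ[ZMod p] MvPolynomial (Fin n) (ZMod p) :=
  aeval (fun j : Fin n => ∑ i : Fin n, C ((g : Matrix (Fin n) (Fin n) (ZMod p)) i j) * X i)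

section ZModAlgebra

variable {p : ℕ} [Fact p.Prime]

theorem prod_X_sub_C_zmod :
    ∏ t : ZMod p, (Polynomial.X - Polynomial.C t)
      = (Polynomial.X ^ p - Polynomial.X : Polynomial (ZMod p)) := by
  have hp : 1 < p := (Fact.out : p.Prime).one_lt
  have hroots := FiniteField.roots_X_pow_card_sub_X (ZMod p)
  rw [ZMod.card] at hroots
  have hprod := Polynomial.prod_multiset_X_sub_C_of_monic_of_roots_card_eq
    (Polynomial.monic_X_pow_sub (p := (Polynomial.X : Polynomial (ZMod p)))
      (by simpa using (by exact_mod_cast hp : (1 : WithBot ℕ) < p)))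
    (by rw [hroots, FiniteField.X_pow_card_sub_X_natDegree_eq (ZMod p) hp]; simp)
  rw [hroots] at hprod
  exact (Finset.prod_map_val _ _).symm.trans hprod

theorem prod_sub_algebraMap_zmod {A : Type*} [CommRing A] [Algebra (ZMod p) A] (x : A) :
    ∏ t : ZMod p, (x - algebraMap (ZMod p) A t) = x ^ p - x := by
  simpa [Polynomial.aeval_def, Polynomial.eval₂_finsetProd] using
    congrArg (Polynomial.aeval x) (prod_X_sub_C_zmod (p := p))

theorem prod_sub_smul_zmod_of_field {F : Type*} [Field F] [Algebra (ZMod p) F] (w a : F) :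
    ∏ t : ZMod p, (w - t • a) = w ^ p - a ^ (p - 1) * w := by
  have hp : 1 < p := (Fact.out : p.Prime).one_lt
  rcases eq_or_ne a 0 with rfl | ha
  · simp [zero_pow (Nat.sub_ne_zero_of_lt hp)]
  calc ∏ t : ZMod p, (w - t • a) = ∏ t : ZMod p, a * (w / a - algebraMap (ZMod p) F t) := by
        refine Finset.prod_congr rfl fun t _ => ?_
        rw [Algebra.smul_def]; field_simp
    _ = a ^ p * ((w / a) ^ p - w / a) := by
        rw [Finset.prod_mul_distrib, Finset.prod_const, Finset.card_univ, ZMod.card,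
          prod_sub_algebraMap_zmod]
    _ = w ^ p - a ^ (p - 1) * w := by
        have : a ^ p = a ^ (p - 1) * a := by rw [← pow_succ, Nat.sub_add_cancel hp.le]
        rw [mul_sub, div_pow, mul_div_cancel₀ _ (pow_ne_zero _ ha), this, mul_assoc,
          mul_div_cancel₀ _ ha]

theorem prod_sub_smul_zmod {R : Type*} [CommRing R] [IsDomain R] [Algebra (ZMod p) R] (w a : R) :
    ∏ t : ZMod p, (w - t • a) = w ^ p - a ^ (p - 1) * w := by
  apply IsFractionRing.injective R (FractionRing R)
  simp only [map_prod, map_sub, map_pow, map_mul, ZMod.map_smul]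
  exact prod_sub_smul_zmod_of_field _ _

theorem AddMonoidHom.prod_map_sub_smul_zmod {R : Type*} [CommRing R] [IsDomain R]
    [Algebra (ZMod p) R] (φ : R →+ R) (r a : R) :
    ∏ t : ZMod p, φ (r - t • a) = φ r ^ p - φ a ^ (p - 1) * φ r := by
  simp only [map_sub, ZMod.map_smul]
  exact prod_sub_smul_zmod _ _

theorem Polynomial.coeff_pow_char_mul {R : Type*} [CommRing R] [CharP R p] (g : Polynomial R)
    (m : ℕ) : (g ^ p).coeff (m * p) = g.coeff m ^ p := by
  rw [← map_frobenius_expand, coeff_map, coeff_expand_mul (Fact.out : p.Prime).pos,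
    frobenius_def]

theorem Polynomial.coeff_pow_char_of_not_dvd {R : Type*} [CommRing R] [CharP R p]
    (g : Polynomial R) {m : ℕ} (hm : ¬ p ∣ m) : (g ^ p).coeff m = 0 := by
  rw [← map_frobenius_expand, coeff_map, coeff_expand (Fact.out : p.Prime).pos, if_neg hm,
    map_zero]

end ZModAlgebra

section DicksonRecursion

variable (p n : ℕ) [Fact p.Prime]

theorem V_zero : V p n 0 = {0} := by
  simp only [V, Nat.not_lt_zero, Finset.filter_false, Finset.sum_empty]
  exact Finset.image_const Finset.univ_nonempty 0

theorem sum_filter_lt_succ {M : Type*} [AddCommMonoid M] {k : ℕ} (hk : k < n) (g : Fin n → M) :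
    ∑ j ∈ Finset.univ.filter (fun j : Fin n => j.val < k + 1), g j
      = ∑ j ∈ Finset.univ.filter (fun j : Fin n => j.val < k), g j + g ⟨k, hk⟩ := by
  have : Finset.univ.filter (fun j : Fin n => j.val < k + 1)
      = insert ⟨k, hk⟩ (Finset.univ.filter (fun j : Fin n => j.val < k)) := by
    ext j; simp [Fin.ext_iff]; omega
  rw [this, Finset.sum_insert (by simp), add_comm]

theorem V_succ {k : ℕ} (hk : k < n) :
    V p n (k + 1)
      = (V p n k ×ˢ (Finset.univ : Finset (ZMod p))).image fun x => x.1 + x.2 • X ⟨k, hk⟩ := by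
  ext s
  simp only [V, Finset.mem_image, Finset.mem_product, Finset.mem_univ, true_and, and_true,
    Prod.exists, sum_filter_lt_succ n hk, smul_eq_C_mul]
  constructor
  · rintro ⟨c, rfl⟩
    exact ⟨_, c ⟨k, hk⟩, ⟨c, rfl⟩, rfl⟩
  · rintro ⟨_, t, ⟨c, rfl⟩, rfl⟩
    refine ⟨Function.update c ⟨k, hk⟩ t, ?_⟩
    rw [Function.update_self]
    congr 1
    refine Finset.sum_congr rfl fun j hj => ?_
    have hjk : j.val < k := by simpa using hj
    rw [Function.update_of_ne (Fin.ne_of_val_ne hjk.ne)]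

theorem eval_single_eq_zero_of_mem_V {k : ℕ} {u : MvPolynomial (Fin n) (ZMod p)}
    (hu : u ∈ V p n k) (j : Fin n) (hj : k ≤ j.val) : eval (Pi.single j 1) u = 0 := by
  obtain ⟨c, -, rfl⟩ := Finset.mem_image.mp hu
  simp only [map_sum, map_mul, eval_C, eval_X]
  refine Finset.sum_eq_zero fun i hi => ?_
  have hik : i.val < k := by simpa using hi
  rw [Pi.single_eq_of_ne (Fin.ne_of_val_ne (by omega)), mul_zero]

theorem eval_f (k : ℕ) (r : MvPolynomial (Fin n) (ZMod p)) :
    (f p n k).eval r = ∏ u ∈ V p n k, (r - u) := by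
  simp [f, Polynomial.eval_prod]

theorem eval_f_succ {k : ℕ} (hk : k < n) (r : MvPolynomial (Fin n) (ZMod p)) :
    (f p n (k + 1)).eval r = ∏ t : ZMod p, (f p n k).eval (r - t • X ⟨k, hk⟩) := by
  have hinj : Set.InjOn (fun x : MvPolynomial (Fin n) (ZMod p) × ZMod p => x.1 + x.2 • X ⟨k, hk⟩)
      (V p n k ×ˢ (Finset.univ : Finset (ZMod p)) :) := by
    rintro ⟨u, t⟩ hu ⟨u', t'⟩ hu' h
    simp only [Finset.coe_product, Set.mem_prod, Finset.mem_coe] at hu hu'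
    have ht : t = t' := by
      simpa [eval_single_eq_zero_of_mem_V p n hu.1 ⟨k, hk⟩ le_rfl,
        eval_single_eq_zero_of_mem_V p n hu'.1 ⟨k, hk⟩ le_rfl]
        using congrArg (eval (Pi.single ⟨k, hk⟩ 1)) h
    subst ht
    simpa using h
  simp only [eval_f, V_succ p n hk, Finset.prod_image hinj, Finset.prod_product_right]
  refine Finset.prod_congr rfl fun t _ => Finset.prod_congr rfl fun u _ => ?_
  ring

theorem eval_f_succ_of_additive {k : ℕ} (hk : k < n)
    (hadd : ∀ r s, (f p n k).eval (r + s) = (f p n k).eval r + (f p n k).eval s)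
    (r : MvPolynomial (Fin n) (ZMod p)) :
    (f p n (k + 1)).eval r = (f p n k).eval r ^ p - hGen p n ⟨k, hk⟩ * (f p n k).eval r := by
  rw [eval_f_succ p n hk]
  exact (AddMonoidHom.mk' (fun r => (f p n k).eval r) hadd).prod_map_sub_smul_zmod r _

theorem eval_f_add {k : ℕ} (hk : k ≤ n) (r s : MvPolynomial (Fin n) (ZMod p)) :
    (f p n k).eval (r + s) = (f p n k).eval r + (f p n k).eval s := by
  induction k generalizing r s with
  | zero => simp [eval_f, V_zero]
  | succ k ih =>
    have hadd := ih (Nat.le_of_succ_le hk)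
    simp only [eval_f_succ_of_additive p n hk hadd, hadd, add_pow_char]
    ring

theorem f_succ {k : ℕ} (hk : k < n) :
    f p n (k + 1) = f p n k ^ p - Polynomial.C (hGen p n ⟨k, hk⟩) * f p n k := by
  have : Nonempty (Fin n) := ⟨⟨k, hk⟩⟩
  refine Polynomial.funext fun r => ?_
  simp [eval_f_succ_of_additive p n hk (eval_f_add p n hk.le)]

end DicksonRecursion

/-- the recursion `d_{n,i} = d_{n-1,i-1}^p + d_{n-1,i} · h_n`
(with `d_{n-1,-1} = 0`). -/
theorem stmt10 (p n : ℕ) [Fact p.Prime] (hn : 1 ≤ n) (i : ℕ) (hi : i ≤ n - 1) :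
    d p n n i = (if i = 0 then 0 else (d p n (n - 1) (i - 1)) ^ p)
      + d p n (n - 1) i * hGen p n ⟨n - 1, by omega⟩ := by
  obtain ⟨k, rfl⟩ : ∃ k, n = k + 1 := ⟨n - 1, by omega⟩
  simp only [Nat.add_sub_cancel] at hi ⊢
  rw [d, f_succ p (k + 1) (Nat.lt_add_one k), Polynomial.coeff_sub, Polynomial.coeff_C_mul]
  rcases i with _ | j
  · rw [if_pos rfl, d, pow_zero, Nat.sub_zero, Nat.sub_zero, pow_succ,
      Polynomial.coeff_pow_char_of_not_dvd _ (Nat.Prime.not_dvd_one Fact.out)]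
    ring
  · have hsign : ((-1 : MvPolynomial (Fin (k + 1)) (ZMod p)) ^ (k - j)) ^ p = (-1) ^ (k - j) := by
      rw [← pow_mul, mul_comm, pow_mul, neg_one_pow_char]
    have hexp : k - j = k - (j + 1) + 1 := by omega
    rw [pow_succ, Polynomial.coeff_pow_char_mul, ← pow_succ, if_neg j.succ_ne_zero, d, d,
      Nat.add_sub_cancel, mul_pow, hsign, Nat.add_sub_add_right, hexp, pow_succ]
    ring
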